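/- Let ρ_j (j ∈ ℤ₊) be positive integers and ψ^m_j ∈ L₂ for m = 1,…,ρ_j. If the family Ψ = {S^k_j ψ^m_j : j ∈ ℤ₊, m = 1,…,ρ_j, k ∈ R_j} forms a Parseval wavelet frame in L₂, then Σ_{j=0}^∞ Σ_{m=1}^{ρ_j} 2^j |ψ̂^m_j(n)|² = 1 for every n ∈ ℤ. -/

import Mathlib

open MeasureTheory Complex Finset Filter ComplexConjugate

noncomputable section

instance : Fact ((0:ℝ) < 1) := ⟨one_pos⟩

/-- The space `L₂` of 1-periodic square-integrable complex functions, realized as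
`Lp ℂ 2` over the additive circle of length 1 with normalized Haar measure. -/
abbrev PL2 : Type := Lp ℂ 2 (@AddCircle.haarAddCircle (1 : ℝ) _)

/-- Fourier coefficient `f̂(n) = ∫₀¹ f(x) e^{-2πinx} dx`. -/
def fCoeff (f : PL2) (n : ℤ) : ℂ := fourierCoeff (f : AddCircle (1 : ℝ) → ℂ) n

/-- Inner product `⟨f, S^k_j g⟩ = ∫₀¹ f(x) conj(g(x + 2^{-j} k)) dx`. -/
def shiftInner (f g : PL2) (j : ℕ) (k : ℤ) : ℂ :=
  ∫ x : AddCircle (1 : ℝ),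
    f x * conj (g (x + (((2:ℝ)^(-(j:ℤ)) * (k:ℝ) : ℝ) : AddCircle (1 : ℝ))))
    ∂AddCircle.haarAddCircle

/-- `R_j = {-2^{j-1}+1, …, 2^{j-1}}` for `j ≥ 1` and `R₀ = {0}`. -/
def Rset (j : ℕ) : Finset ℤ :=
  if j = 0 then {0} else Finset.Icc (-(2^(j-1) : ℤ) + 1) (2^(j-1))

/-- The system `{S^k_j ψ^m_j : j ∈ ℤ₊, 1 ≤ m ≤ ρ_j, k ∈ R_j}` is a Parseval wavelet frame. -/
def IsParsevalFrame (ρ : ℕ → ℕ) (ψ : ℕ → ℕ → PL2) : Prop :=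
  ∀ f : PL2, ‖f‖^2 =
    ∑' j : ℕ, ∑ m ∈ Finset.Icc 1 (ρ j), ∑ k ∈ Rset j,
      (‖shiftInner f (ψ j m) j k‖)^2

/-! Test the frame identity on `f = e_n`: translating `ψ` only multiplies `ψ̂(n)` by a unimodular
phase, so each of the `#R_j = 2^j` shifts contributes `|ψ̂^m_j(n)|²`, while `‖e_n‖ = 1`. -/

lemma card_Rset (j : ℕ) : #(Rset j) = 2 ^ j := by
  rcases j with _ | i
  · rfl
  · rw [Rset, if_neg i.succ_ne_zero, Int.card_Icc, Nat.add_sub_cancel]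
    have hlen : (2 : ℤ) ^ i + 1 - (-2 ^ i + 1) = ((2 ^ (i + 1) : ℕ) : ℤ) := by push_cast; ring
    rw [hlen, Int.toNat_natCast]

lemma fourier_apply_add {T : ℝ} (n : ℤ) (x y : AddCircle T) :
    fourier n (x + y) = fourier n x * fourier n y := by
  simp only [fourier_apply, smul_add, AddCircle.toCircle_add, Circle.coe_mul]

section

variable {T : ℝ} [Fact (0 < T)]

lemma integral_fourier_mul_conj_comp_add_right (g : AddCircle T → ℂ) (n : ℤ)
    (a : AddCircle T) :
    ∫ x, fourier n x * conj (g (x + a)) ∂AddCircle.haarAddCircle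
      = fourier n (-a) * conj (fourierCoeff g n) := by
  calc ∫ x, fourier n x * conj (g (x + a)) ∂AddCircle.haarAddCircle
      = ∫ x, fourier n (x + a + -a) * conj (g (x + a)) ∂AddCircle.haarAddCircle := by
        simp only [add_neg_cancel_right]
    _ = ∫ x, fourier n (x + -a) * conj (g x) ∂AddCircle.haarAddCircle :=
        integral_add_right_eq_self (fun x ↦ fourier n (x + -a) * conj (g x)) a
    _ = fourier n (-a) * ∫ x, conj (fourier (-n) x • g x) ∂AddCircle.haarAddCircle := by
        rw [← integral_const_mul]
        congr 1 with x
        rw [fourier_apply_add, smul_eq_mul, map_mul, fourier_neg, conj_conj]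
        ring
    _ = fourier n (-a) * conj (fourierCoeff g n) := by rw [integral_conj, fourierCoeff]

lemma norm_fourierLp_two (n : ℤ) :
    ‖(fourierLp 2 n : Lp ℂ 2 (@AddCircle.haarAddCircle T _))‖ = 1 :=
  orthonormal_fourier.1 n

end

lemma norm_shiftInner_fourierLp (g : PL2) (n : ℤ) (j : ℕ) (k : ℤ) :
    ‖shiftInner (fourierLp 2 n) g j k‖ = ‖fCoeff g n‖ := by
  have hfourier : shiftInner (fourierLp 2 n) g j k
      = ∫ x, fourier n x * conj (g (x + ((2 ^ (-(j : ℤ)) * k : ℝ) : AddCircle (1 : ℝ))))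
          ∂AddCircle.haarAddCircle :=
    integral_congr_ae <| by
      filter_upwards [coeFn_fourierLp 2 n] with x hx
      rw [hx]
  rw [hfourier, integral_fourier_mul_conj_comp_add_right, norm_mul, fourier_apply,
    Circle.norm_coe, one_mul, Complex.norm_conj, fCoeff]

theorem parseval_frame_necessity_first_general
    (ρ : ℕ → ℕ) (ψ : ℕ → ℕ → PL2)
    (hframe : IsParsevalFrame ρ ψ) :
    ∀ n : ℤ,
      ∑' j : ℕ, ∑ m ∈ Finset.Icc 1 (ρ j),
        (2:ℝ)^j * (‖fCoeff (ψ j m) n‖)^2 = 1 := by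
  intro n
  have h := hframe (fourierLp 2 n)
  simp only [norm_shiftInner_fourierLp, sum_const, card_Rset, nsmul_eq_mul, norm_fourierLp_two,
    one_pow, Nat.cast_pow, Nat.cast_ofNat] at h
  exact h.symm

theorem parseval_frame_necessity_first
    (ρ : ℕ → ℕ) (hρ : ∀ j, 0 < ρ j) (ψ : ℕ → ℕ → PL2)
    (hframe : IsParsevalFrame ρ ψ) :
    ∀ n : ℤ,
      ∑' j : ℕ, ∑ m ∈ Finset.Icc 1 (ρ j),
        (2:ℝ)^j * (‖fCoeff (ψ j m) n‖)^2 = 1 :=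
  parseval_frame_necessity_first_general ρ ψ hframe

end
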